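/- Let M : E → Y be linear, C a nice closed convex cone, and x ∈ ri(C ∩ range M). If range(M) ⊆ span face(x, C), then M* C* is closed. -/

import Mathlib

open Pointwise

/-- `F` is a face of the convex set `C`. -/
def IsFaceOf {M : Type*} [AddCommGroup M] [Module ℝ M] (F C : Set M) : Prop :=
  F ⊆ C ∧ Convex ℝ F ∧ ∀ x ∈ C, ∀ y ∈ C, ∀ t : ℝ, t ∈ Set.Ioo (0 : ℝ) 1 →
    t • x + (1 - t) • y ∈ F → x ∈ F ∧ y ∈ F

/-- The minimal face of `C` containing `S`. -/
def minFace {M : Type*} [AddCommGroup M] [Module ℝ M] (S C : Set M) : Set M :=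
  ⋂₀ {F | IsFaceOf F C ∧ S ⊆ F}

/-- The nonnegative polar cone of a set `C`. -/
def polarCone {M : Type*} [NormedAddCommGroup M] [InnerProductSpace ℝ M]
    (C : Set M) : Set M :=
  {y | ∀ x ∈ C, 0 ≤ (inner ℝ y x : ℝ)}

/-!
Let `F = face(x, C)` and `L = span F`, so that `F^⊥ = L^⊥`. Since `range M ⊆ L`, the adjoint `M*`
vanishes on `L^⊥`, and projecting onto `L` gives `M* C* = M* K` for the cone
`K = (C* + F^⊥) ∩ L`, which is closed because `C` is nice. `M*` is injective on `K`: if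
`M* (c + f) = 0` with `c ∈ C*`, `f ∈ F^⊥`, then `⟪c, x⟫ = 0` because `x ∈ range M`, so the exposed
face `{y ∈ C | ⟪c, y⟫ = 0}` contains `x`, hence `F`, and `c + f ∈ L ∩ L^⊥ = 0`. Finally, a linear
map that is injective on a closed cone in finite dimension is bounded below on it, hence maps it
to a closed set.
-/

section ConeImage

variable {Y E : Type*} [NormedAddCommGroup Y] [NormedAddCommGroup E]

theorem isClosed_image_of_mul_norm_le [ProperSpace Y] {f : Y → E} (hf : Continuous f)
    {K : Set Y} (hK : IsClosed K) {c : ℝ} (hc : 0 < c) (hbound : ∀ k ∈ K, c * ‖k‖ ≤ ‖f k‖) :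
    IsClosed (f '' K) := by
  refine isClosed_of_closure_subset fun y hy => ?_
  set R := ‖y‖ + 1
  have hcompact : IsCompact (f '' (K ∩ Metric.closedBall 0 (R / c))) :=
    ((isCompact_closedBall 0 _).inter_left hK).image hf
  have hball : Metric.ball 0 R ∩ f '' K ⊆ f '' (K ∩ Metric.closedBall 0 (R / c)) := by
    rintro _ ⟨hR, k, hk, rfl⟩
    refine ⟨k, ⟨hk, ?_⟩, rfl⟩
    rw [mem_closedBall_zero_iff, le_div_iff₀ hc, mul_comm]
    exact (hbound k hk).trans (mem_ball_zero_iff.1 hR).le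
  have hyR : y ∈ Metric.ball (0 : E) R := by simp [R]
  obtain ⟨k, hk, rfl⟩ := hcompact.isClosed.closure_subset_iff.2 hball
    (Metric.isOpen_ball.inter_closure ⟨hyR, hy⟩)
  exact ⟨k, hk.1, rfl⟩

variable [NormedSpace ℝ Y] [FiniteDimensional ℝ Y] [NormedSpace ℝ E]

theorem exists_pos_mul_norm_le_norm_map_of_cone (A : Y →ₗ[ℝ] E) {K : Set Y} (hK : IsClosed K)
    (hcone : ∀ k ∈ K, ∀ t : ℝ, 0 ≤ t → t • k ∈ K) (hker : ∀ k ∈ K, A k = 0 → k = 0) :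
    ∃ c > 0, ∀ k ∈ K, c * ‖k‖ ≤ ‖A k‖ := by
  have hcompact : IsCompact (K ∩ Metric.sphere 0 1) := (isCompact_sphere 0 1).inter_left hK
  obtain ⟨c, hc, hmin⟩ := hcompact.exists_forall_le' (a := 0)
    A.continuous_of_finiteDimensional.norm.continuousOn
    fun k hk => norm_pos_iff.2 fun h => by simpa [hker k hk.1 h] using hk.2
  refine ⟨c, hc, fun k hk => ?_⟩
  rcases eq_or_ne k 0 with rfl | hk0
  · simp
  have hnorm : 0 < ‖k‖ := norm_pos_iff.2 hk0
  have hunit := hmin (‖k‖⁻¹ • k)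
    ⟨hcone k hk _ (inv_nonneg.2 hnorm.le), by simp [norm_smul, hnorm.ne']⟩
  rwa [map_smul, norm_smul, norm_inv, norm_norm, inv_mul_eq_div, le_div_iff₀ hnorm] at hunit

theorem isClosed_image_of_cone (A : Y →ₗ[ℝ] E) {K : Set Y} (hK : IsClosed K)
    (hcone : ∀ k ∈ K, ∀ t : ℝ, 0 ≤ t → t • k ∈ K) (hker : ∀ k ∈ K, A k = 0 → k = 0) :
    IsClosed (A '' K) :=
  have : ProperSpace Y := FiniteDimensional.proper ℝ Y
  let ⟨_, hc, hbound⟩ := exists_pos_mul_norm_le_norm_map_of_cone A hK hcone hker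
  isClosed_image_of_mul_norm_le A.continuous_of_finiteDimensional hK hc hbound

end ConeImage

section Faces

variable {V : Type*} [AddCommGroup V] [Module ℝ V] {S F C : Set V}

theorem isFaceOf_self (hC : Convex ℝ C) : IsFaceOf C C :=
  ⟨subset_rfl, hC, fun _ ha _ hb _ _ _ => ⟨ha, hb⟩⟩

theorem subset_minFace : S ⊆ minFace S C :=
  Set.subset_sInter fun _ hF => hF.2

theorem minFace_subset (hF : IsFaceOf F C) (hS : S ⊆ F) : minFace S C ⊆ F :=
  Set.sInter_subset_of_mem ⟨hF, hS⟩

theorem minFace_isFaceOf (hC : Convex ℝ C) (hS : S ⊆ C) : IsFaceOf (minFace S C) C := by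
  refine ⟨minFace_subset (isFaceOf_self hC) hS, convex_sInter fun F hF => hF.1.2.1,
    fun a ha b hb t ht hmem => ?_⟩
  simp only [minFace, Set.mem_sInter] at hmem ⊢
  exact ⟨fun F hF => (hF.1.2.2 a ha b hb t ht (hmem F hF)).1,
    fun F hF => (hF.1.2.2 a ha b hb t ht (hmem F hF)).2⟩

end Faces

section InnerProduct

variable {Y : Type*} [NormedAddCommGroup Y] [InnerProductSpace ℝ Y]

open Submodule

theorem coe_orthogonal_span (F : Set Y) :
    ((span ℝ F)ᗮ : Set Y) = {y | ∀ z ∈ F, (inner ℝ y z : ℝ) = 0} := by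
  ext y
  simp only [SetLike.mem_coe, mem_orthogonal']
  exact ⟨fun h z hz => h z (subset_span hz), fun h u hu => by
    induction hu using span_induction with
    | mem z hz => exact h z hz
    | zero => simp
    | add a b _ _ ha hb => rw [inner_add_right, ha, hb, add_zero]
    | smul t a _ ha => rw [real_inner_smul_right, ha, mul_zero]⟩

theorem smul_mem_polarCone {C : Set Y} {y : Y} (hy : y ∈ polarCone C) {t : ℝ} (ht : 0 ≤ t) :
    t • y ∈ polarCone C := fun x hx => by
  rw [real_inner_smul_left]; exact mul_nonneg ht (hy x hx)

theorem isFaceOf_inter_inner_eq_zero {C : Set Y} (hC : Convex ℝ C) {c : Y}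
    (hc : c ∈ polarCone C) : IsFaceOf {y ∈ C | (inner ℝ c y : ℝ) = 0} C := by
  refine ⟨Set.sep_subset _ _, fun a ha b hb s t hs ht hst => ⟨hC ha.1 hb.1 hs ht hst, ?_⟩,
    fun a ha b hb t ht hmem => ?_⟩
  · simp [inner_add_right, real_inner_smul_right, ha.2, hb.2]
  · have hsum := hmem.2
    rw [inner_add_right, real_inner_smul_right, real_inner_smul_right] at hsum
    have hca := hc a ha
    have hcb := hc b hb
    have ht₀ := ht.1
    have ht₁ : 0 < 1 - t := sub_pos.2 ht.2
    exact ⟨⟨ha, by nlinarith⟩, ⟨hb, by nlinarith⟩⟩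

theorem mem_orthogonal_span_minFace {C : Set Y} (hC : Convex ℝ C) {c x : Y}
    (hc : c ∈ polarCone C) (hxC : x ∈ C) (hcx : (inner ℝ c x : ℝ) = 0) :
    c ∈ (span ℝ (minFace {x} C))ᗮ := by
  rw [← SetLike.mem_coe, coe_orthogonal_span]
  exact fun y hy => (minFace_subset (isFaceOf_inter_inner_eq_zero hC hc)
    (Set.singleton_subset_iff.2 ⟨hxC, hcx⟩) hy).2

theorem image_eq_image_add_orthogonal_inter {E : Type*} [AddCommGroup E] [Module ℝ E]
    (A : Y →ₗ[ℝ] E) (P : Set Y) (L : Submodule ℝ Y) [L.HasOrthogonalProjection]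
    (hA : Lᗮ ≤ LinearMap.ker A) : A '' P = A '' ((P + Lᗮ) ∩ L) := by
  refine subset_antisymm ?_ ?_
  · rintro _ ⟨c, hc, rfl⟩
    have hproj : L.starProjection c - c ∈ Lᗮ :=
      neg_sub c _ ▸ Lᗮ.neg_mem (L.sub_starProjection_mem_orthogonal c)
    refine ⟨L.starProjection c, ⟨⟨c, hc, _, hproj, add_sub_cancel _ _⟩,
      L.starProjection_apply_mem c⟩, ?_⟩
    rw [← sub_eq_zero, ← map_sub, hA hproj]
  · rintro _ ⟨_, ⟨⟨c, hc, f, hf, rfl⟩, -⟩, rfl⟩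
    exact ⟨c, hc, by rw [map_add, hA hf, add_zero]⟩

theorem eq_zero_of_mem_span_minFace_of_inner_eq_zero {C : Set Y} (hC : Convex ℝ C) {x c f : Y}
    (hxC : x ∈ C) (hc : c ∈ polarCone C) (hf : f ∈ (span ℝ (minFace {x} C))ᗮ)
    (hcf : c + f ∈ span ℝ (minFace {x} C)) (hinner : (inner ℝ (c + f) x : ℝ) = 0) :
    c + f = 0 := by
  have hfx : (inner ℝ f x : ℝ) = 0 :=
    (mem_orthogonal' _ f).1 hf x (subset_span (subset_minFace rfl))
  rw [inner_add_left, hfx, add_zero] at hinner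
  have hc' := mem_orthogonal_span_minFace hC hc hxC hinner
  simpa using (inf_orthogonal_eq_bot (span ℝ (minFace {x} C))).le ⟨hcf, add_mem hc' hf⟩

end InnerProduct

theorem image_closed_of_range_subset_span_face_general
    {E Y : Type*} [NormedAddCommGroup E] [InnerProductSpace ℝ E]
    [FiniteDimensional ℝ E] [NormedAddCommGroup Y] [InnerProductSpace ℝ Y]
    [FiniteDimensional ℝ Y]
    (M : E →ₗ[ℝ] Y) (C : Set Y)
    (hconv : Convex ℝ C)
    (hnice : ∀ F : Set Y, IsFaceOf F C →
      IsClosed (polarCone C + {y : Y | ∀ x ∈ F, (inner ℝ y x : ℝ) = 0}))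
    (x : Y) (hx : x ∈ intrinsicInterior ℝ (C ∩ Set.range M))
    (hrange : Set.range M ⊆ (Submodule.span ℝ (minFace {x} C) : Set Y)) :
    IsClosed (LinearMap.adjoint M '' polarCone C) := by
  obtain ⟨hxC, e, rfl⟩ := intrinsicInterior_subset hx
  set L := Submodule.span ℝ (minFace {M e} C)
  have hker : Lᗮ ≤ LinearMap.ker (LinearMap.adjoint M) :=
    M.orthogonal_range ▸ Submodule.orthogonal_le (SetLike.coe_subset_coe.1 (M.coe_range ▸ hrange))
  rw [image_eq_image_add_orthogonal_inter _ _ L hker]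
  have hclosed : IsClosed (polarCone C + (Lᗮ : Set Y)) := by
    rw [coe_orthogonal_span]
    exact hnice _ (minFace_isFaceOf hconv (Set.singleton_subset_iff.2 hxC))
  refine isClosed_image_of_cone _ (hclosed.inter L.closed_of_finiteDimensional) ?_ ?_
  · rintro _ ⟨⟨c, hc, f, hf, rfl⟩, hL⟩ t ht
    exact ⟨⟨t • c, smul_mem_polarCone hc ht, t • f, Lᗮ.smul_mem t hf, (smul_add t c f).symm⟩,
      L.smul_mem t hL⟩
  · rintro _ ⟨⟨c, hc, f, hf, rfl⟩, hL⟩ hAu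
    refine eq_zero_of_mem_span_minFace_of_inner_eq_zero hconv hxC hc hf hL ?_
    rw [← LinearMap.adjoint_inner_left, hAu, inner_zero_left]

/-- Let `M : E → Y` be linear, `C ⊆ Y` a nice closed convex cone
(i.e. `C* + F^⊥` is closed for every face `F` of `C`), and
`x ∈ ri (C ∩ range M)`.  If `range M ⊆ span face(x, C)`, then `M* C*` is closed. -/
theorem image_closed_of_range_subset_span_face
    {E Y : Type*} [NormedAddCommGroup E] [InnerProductSpace ℝ E]
    [FiniteDimensional ℝ E] [NormedAddCommGroup Y] [InnerProductSpace ℝ Y]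
    [FiniteDimensional ℝ Y]
    (M : E →ₗ[ℝ] Y) (C : Set Y)
    (hconv : Convex ℝ C) (hcone : ∀ x ∈ C, ∀ t : ℝ, 0 ≤ t → t • x ∈ C)
    (hclosed : IsClosed C)
    (hnice : ∀ F : Set Y, IsFaceOf F C →
      IsClosed (polarCone C + {y : Y | ∀ x ∈ F, (inner ℝ y x : ℝ) = 0}))
    (x : Y) (hx : x ∈ intrinsicInterior ℝ (C ∩ Set.range M))
    (hrange : Set.range M ⊆ (Submodule.span ℝ (minFace {x} C) : Set Y)) :
    IsClosed (LinearMap.adjoint M '' polarCone C) :=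
  image_closed_of_range_subset_span_face_general M C hconv hnice x hx hrange
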